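/- Suppose A,B,C,D are not coplanar, write A=(a₁,a₂,a₃), B=(b₁,b₂,b₃), C=(c₁,c₂,c₃), D=(d₁,d₂,d₃), and let Δ = det[[a₁−b₁, a₂−b₂, a₃−b₃],[a₁−c₁, a₂−c₂, a₃−c₃],[a₁−d₁, a₂−d₂, a₃−d₃]]. If (X,Y) is a solution of System (*), then (det[[Γ_B(Y)−Γ_A(Y), a₂−b₂, a₃−b₃],[Γ_C(Y)−Γ_A(Y), a₂−c₂, a₃−c₃],[Γ_D(Y)−Γ_A(Y), a₂−d₂, a₃−d₃]] − 2Δa₁)² + (det[[a₁−b₁, Γ_B(Y)−Γ_A(Y), a₃−b₃],[a₁−c₁, Γ_C(Y)−Γ_A(Y), a₃−c₃],[a₁−d₁, Γ_D(Y)−Γ_A(Y), a₃−d₃]] − 2Δa₂)² + (det[[a₁−b₁, a₂−b₂, Γ_B(Y)−Γ_A(Y)],[a₁−c₁, a₂−c₂, Γ_C(Y)−Γ_A(Y)],[a₁−d₁, a₂−d₂, Γ_D(Y)−Γ_A(Y)]] − 2Δa₃)² − 4Δ²(Γ_A(Y)+‖A‖²) = 0. (At any solution k_T‖Y−T‖²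 > 1 for all T, so each Γ_T(Y) is defined.) -/

import Mathlib

noncomputable section

/-- The Euclidean space ℝ³. -/
abbrev E3 := EuclideanSpace ℝ (Fin 3)

/-- `kc Xs Ys T` is the constant `k_T = 1/‖X*−T‖² + 1/‖Y*−T‖²`. -/
def kc (Xs Ys T : E3) : ℝ := 1 / ‖Xs - T‖ ^ 2 + 1 / ‖Ys - T‖ ^ 2

/-- `(X, Y)` is a solution of System (*). -/
def IsSol (A B C D E F Xs Ys X Y : E3) : Prop :=
  ∀ T ∈ ({A, B, C, D, E, F} : Set E3),
    X ≠ T ∧ Y ≠ T ∧ 1 / ‖X - T‖ ^ 2 + 1 / ‖Y - T‖ ^ 2 = kc Xs Ys T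

/-- Condition (i): no four of the six points `A,B,C,D,E,F` are coplanar. -/
def CondI (A B C D E F : E3) : Prop :=
  ∀ T₁ T₂ T₃ T₄ : E3,
    T₁ ∈ ({A, B, C, D, E, F} : Set E3) → T₂ ∈ ({A, B, C, D, E, F} : Set E3) →
    T₃ ∈ ({A, B, C, D, E, F} : Set E3) → T₄ ∈ ({A, B, C, D, E, F} : Set E3) →
    T₁ ≠ T₂ → T₁ ≠ T₃ → T₁ ≠ T₄ → T₂ ≠ T₃ → T₂ ≠ T₄ → T₃ ≠ T₄ →
    ¬ Coplanar ℝ ({T₁, T₂, T₃, T₄} : Set E3)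

/-- Condition (ii): no four of the six spheres of center `T` and radius `1/√k_T`
share a common point of ℝ³. -/
def CondII (A B C D E F Xs Ys : E3) : Prop :=
  ∀ T₁ T₂ T₃ T₄ : E3,
    T₁ ∈ ({A, B, C, D, E, F} : Set E3) → T₂ ∈ ({A, B, C, D, E, F} : Set E3) →
    T₃ ∈ ({A, B, C, D, E, F} : Set E3) → T₄ ∈ ({A, B, C, D, E, F} : Set E3) →
    T₁ ≠ T₂ → T₁ ≠ T₃ → T₁ ≠ T₄ → T₂ ≠ T₃ → T₂ ≠ T₄ → T₃ ≠ T₄ →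
    ¬ ∃ P : E3,
        ‖P - T₁‖ ^ 2 = 1 / kc Xs Ys T₁ ∧ ‖P - T₂‖ ^ 2 = 1 / kc Xs Ys T₂ ∧
        ‖P - T₃‖ ^ 2 = 1 / kc Xs Ys T₃ ∧ ‖P - T₄‖ ^ 2 = 1 / kc Xs Ys T₄

/-- `Γ_T(Y) = ‖Y−T‖²/(k_T‖Y−T‖² − 1) − ‖T‖²`. -/
def Gamma (Xs Ys T Y : E3) : ℝ :=
  ‖Y - T‖ ^ 2 / (kc Xs Ys T * ‖Y - T‖ ^ 2 - 1) - ‖T‖ ^ 2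

/-!
At a solution, the equation for `T` says `k_T‖Y−T‖² − 1 = ‖Y−T‖²/‖X−T‖² > 0`, so
`Γ_T(Y) = ‖X−T‖² − ‖T‖² = ‖X‖² − 2⟨X,T⟩`. Hence `Γ_T(Y) − Γ_A(Y) = ⟨A−T, 2X⟩` for `T = B, C, D`:
the three differences are the right-hand side `M (2X)` of a linear system whose matrix `M` has rows
`A−B, A−C, A−D`. By Cramer's rule the `i`-th determinant of `Ψ` equals `2Δ Xᵢ`, so `Ψ` is
`4Δ²‖X−A‖² − 4Δ²(Γ_A(Y) + ‖A‖²) = 0`.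
-/

/-- The paper's `Δ`. -/
def tetraDet (A B C D : E3) : ℝ :=
  Matrix.det !![A 0 - B 0, A 1 - B 1, A 2 - B 2;
                A 0 - C 0, A 1 - C 1, A 2 - C 2;
                A 0 - D 0, A 1 - D 1, A 2 - D 2]

/-- The paper's `Ψ_{E,F}(Y)`, with `γ T` standing for `Γ_T(Y)`. -/
def psi (γ : E3 → ℝ) (A B C D : E3) : ℝ :=
  (Matrix.det
      !![γ B - γ A, A 1 - B 1, A 2 - B 2;
         γ C - γ A, A 1 - C 1, A 2 - C 2;
         γ D - γ A, A 1 - D 1, A 2 - D 2]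
      - 2 * tetraDet A B C D * A 0) ^ 2 +
  (Matrix.det
      !![A 0 - B 0, γ B - γ A, A 2 - B 2;
         A 0 - C 0, γ C - γ A, A 2 - C 2;
         A 0 - D 0, γ D - γ A, A 2 - D 2]
      - 2 * tetraDet A B C D * A 1) ^ 2 +
  (Matrix.det
      !![A 0 - B 0, A 1 - B 1, γ B - γ A;
         A 0 - C 0, A 1 - C 1, γ C - γ A;
         A 0 - D 0, A 1 - D 1, γ D - γ A]
      - 2 * tetraDet A B C D * A 2) ^ 2
  - 4 * tetraDet A B C D ^ 2 * (γ A + ‖A‖ ^ 2)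

section Cramer

variable {R : Type*} [CommRing R] (p q r s t u v w z x₀ x₁ x₂ : R)

theorem cramer_fin_three_zero :
    Matrix.det !![p * x₀ + q * x₁ + r * x₂, q, r;
                  s * x₀ + t * x₁ + u * x₂, t, u;
                  v * x₀ + w * x₁ + z * x₂, w, z]
      = Matrix.det !![p, q, r; s, t, u; v, w, z] * x₀ := by
  simp only [Matrix.det_fin_three, Matrix.of_apply, Matrix.cons_val', Matrix.cons_val_zero,
    Matrix.cons_val_fin_one, Matrix.cons_val_one, Matrix.cons_val]
  ring

theorem cramer_fin_three_one :
    Matrix.det !![p, p * x₀ + q * x₁ + r * x₂, r;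
                  s, s * x₀ + t * x₁ + u * x₂, u;
                  v, v * x₀ + w * x₁ + z * x₂, z]
      = Matrix.det !![p, q, r; s, t, u; v, w, z] * x₁ := by
  simp only [Matrix.det_fin_three, Matrix.of_apply, Matrix.cons_val', Matrix.cons_val_zero,
    Matrix.cons_val_fin_one, Matrix.cons_val_one, Matrix.cons_val]
  ring

theorem cramer_fin_three_two :
    Matrix.det !![p, q, p * x₀ + q * x₁ + r * x₂;
                  s, t, s * x₀ + t * x₁ + u * x₂;
                  v, w, v * x₀ + w * x₁ + z * x₂]
      = Matrix.det !![p, q, r; s, t, u; v, w, z] * x₂ := by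
  simp only [Matrix.det_fin_three, Matrix.of_apply, Matrix.cons_val', Matrix.cons_val_zero,
    Matrix.cons_val_fin_one, Matrix.cons_val_one, Matrix.cons_val]
  ring

end Cramer

theorem E3.norm_sq_eq (x : E3) : ‖x‖ ^ 2 = x 0 ^ 2 + x 1 ^ 2 + x 2 ^ 2 := by
  simp [EuclideanSpace.norm_sq_eq, Fin.sum_univ_three]

theorem E3.inner_eq (x y : E3) : inner ℝ x y = x 0 * y 0 + x 1 * y 1 + x 2 * y 2 := by
  simp [PiLp.inner_apply, Fin.sum_univ_three, mul_comm]

theorem norm_sub_sq_sub_norm_sq_sub (X A T : E3) :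
    (‖X - T‖ ^ 2 - ‖T‖ ^ 2) - (‖X - A‖ ^ 2 - ‖A‖ ^ 2)
      = (A 0 - T 0) * (2 * X 0) + (A 1 - T 1) * (2 * X 1) + (A 2 - T 2) * (2 * X 2) := by
  rw [norm_sub_sq_real, norm_sub_sq_real, E3.inner_eq, E3.inner_eq]
  ring

theorem psi_eq_zero {γ : E3 → ℝ} {A B C D : E3} (X : E3)
    (hγ : ∀ T ∈ ({A, B, C, D} : Set E3), γ T = ‖X - T‖ ^ 2 - ‖T‖ ^ 2) :
    psi γ A B C D = 0 := by
  have hdiff : ∀ T ∈ ({B, C, D} : Set E3),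
      γ T - γ A = (A 0 - T 0) * (2 * X 0) + (A 1 - T 1) * (2 * X 1) + (A 2 - T 2) * (2 * X 2) := by
    intro T hT
    rw [hγ T (Set.subset_insert _ _ hT), hγ A (by simp), norm_sub_sq_sub_norm_sq_sub]
  rw [psi, hdiff B (by simp), hdiff C (by simp), hdiff D (by simp), cramer_fin_three_zero,
    cramer_fin_three_one, cramer_fin_three_two, hγ A (by simp), E3.norm_sq_eq (X - A)]
  simp only [tetraDet, PiLp.sub_apply]
  ring

section Solution

variable {Xs Ys T X Y : E3}

theorem kc_mul_norm_sq_sub_one (hX : X ≠ T) (hY : Y ≠ T)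
    (heq : 1 / ‖X - T‖ ^ 2 + 1 / ‖Y - T‖ ^ 2 = kc Xs Ys T) :
    kc Xs Ys T * ‖Y - T‖ ^ 2 - 1 = ‖Y - T‖ ^ 2 / ‖X - T‖ ^ 2 := by
  have hY' : ‖Y - T‖ ≠ 0 := norm_ne_zero_iff.mpr (sub_ne_zero.mpr hY)
  have hX' : ‖X - T‖ ≠ 0 := norm_ne_zero_iff.mpr (sub_ne_zero.mpr hX)
  rw [← heq]
  field_simp
  ring

theorem one_lt_kc_mul_norm_sq (hX : X ≠ T) (hY : Y ≠ T)
    (heq : 1 / ‖X - T‖ ^ 2 + 1 / ‖Y - T‖ ^ 2 = kc Xs Ys T) :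
    1 < kc Xs Ys T * ‖Y - T‖ ^ 2 := by
  have hpos : 0 < ‖Y - T‖ ^ 2 / ‖X - T‖ ^ 2 := by
    have := sub_ne_zero.mpr hX; have := sub_ne_zero.mpr hY; positivity
  linarith [kc_mul_norm_sq_sub_one hX hY heq]

theorem gamma_eq_of_sol (hX : X ≠ T) (hY : Y ≠ T)
    (heq : 1 / ‖X - T‖ ^ 2 + 1 / ‖Y - T‖ ^ 2 = kc Xs Ys T) :
    Gamma Xs Ys T Y = ‖X - T‖ ^ 2 - ‖T‖ ^ 2 := by
  have hY' : ‖Y - T‖ ≠ 0 := norm_ne_zero_iff.mpr (sub_ne_zero.mpr hY)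
  rw [Gamma, kc_mul_norm_sq_sub_one hX hY heq, div_div_eq_mul_div, mul_div_cancel_left₀]
  positivity

end Solution

theorem psi_EF_vanishes_general (A B C D E F Xs Ys : E3)
    (Δ : ℝ)
    (hΔ : Δ = Matrix.det !![A 0 - B 0, A 1 - B 1, A 2 - B 2;
                            A 0 - C 0, A 1 - C 1, A 2 - C 2;
                            A 0 - D 0, A 1 - D 1, A 2 - D 2])
    (X Y : E3) (hsol : IsSol A B C D E F Xs Ys X Y) :
    (∀ T ∈ ({A, B, C, D, E, F} : Set E3), kc Xs Ys T * ‖Y - T‖ ^ 2 > 1) ∧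
    (Matrix.det
        !![Gamma Xs Ys B Y - Gamma Xs Ys A Y, A 1 - B 1, A 2 - B 2;
           Gamma Xs Ys C Y - Gamma Xs Ys A Y, A 1 - C 1, A 2 - C 2;
           Gamma Xs Ys D Y - Gamma Xs Ys A Y, A 1 - D 1, A 2 - D 2]
        - 2 * Δ * A 0) ^ 2 +
    (Matrix.det
        !![A 0 - B 0, Gamma Xs Ys B Y - Gamma Xs Ys A Y, A 2 - B 2;
           A 0 - C 0, Gamma Xs Ys C Y - Gamma Xs Ys A Y, A 2 - C 2;
           A 0 - D 0, Gamma Xs Ys D Y - Gamma Xs Ys A Y, A 2 - D 2]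
        - 2 * Δ * A 1) ^ 2 +
    (Matrix.det
        !![A 0 - B 0, A 1 - B 1, Gamma Xs Ys B Y - Gamma Xs Ys A Y;
           A 0 - C 0, A 1 - C 1, Gamma Xs Ys C Y - Gamma Xs Ys A Y;
           A 0 - D 0, A 1 - D 1, Gamma Xs Ys D Y - Gamma Xs Ys A Y]
        - 2 * Δ * A 2) ^ 2
    - 4 * Δ ^ 2 * (Gamma Xs Ys A Y + ‖A‖ ^ 2) = 0 := by
  subst hΔ
  refine ⟨fun T hT => ?_, ?_⟩
  · obtain ⟨hX, hY, heq⟩ := hsol T hT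
    exact one_lt_kc_mul_norm_sq hX hY heq
  · refine psi_eq_zero (γ := fun T => Gamma Xs Ys T Y) X fun T hT => ?_
    obtain ⟨hX, hY, heq⟩ := hsol T (by simp only [Set.mem_insert_iff] at hT ⊢; tauto)
    exact gamma_eq_of_sol hX hY heq

/-- At any solution (X,Y) of System (*) (with A,B,C,D not coplanar), the quantity
Ψ_{E,F}(Y) built from Γ_A(Y),…,Γ_D(Y) vanishes. -/
theorem psi_EF_vanishes (A B C D E F Xs Ys : E3)
    (hdist : List.Pairwise (· ≠ ·) [A, B, C, D, E, F, Xs, Ys])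
    (hnc : ¬ Coplanar ℝ ({A, B, C, D} : Set E3))
    (Δ : ℝ)
    (hΔ : Δ = Matrix.det !![A 0 - B 0, A 1 - B 1, A 2 - B 2;
                            A 0 - C 0, A 1 - C 1, A 2 - C 2;
                            A 0 - D 0, A 1 - D 1, A 2 - D 2])
    (X Y : E3) (hsol : IsSol A B C D E F Xs Ys X Y) :
    (∀ T ∈ ({A, B, C, D, E, F} : Set E3), kc Xs Ys T * ‖Y - T‖ ^ 2 > 1) ∧
    (Matrix.det
        !![Gamma Xs Ys B Y - Gamma Xs Ys A Y, A 1 - B 1, A 2 - B 2;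
           Gamma Xs Ys C Y - Gamma Xs Ys A Y, A 1 - C 1, A 2 - C 2;
           Gamma Xs Ys D Y - Gamma Xs Ys A Y, A 1 - D 1, A 2 - D 2]
        - 2 * Δ * A 0) ^ 2 +
    (Matrix.det
        !![A 0 - B 0, Gamma Xs Ys B Y - Gamma Xs Ys A Y, A 2 - B 2;
           A 0 - C 0, Gamma Xs Ys C Y - Gamma Xs Ys A Y, A 2 - C 2;
           A 0 - D 0, Gamma Xs Ys D Y - Gamma Xs Ys A Y, A 2 - D 2]
        - 2 * Δ * A 1) ^ 2 +
    (Matrix.det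
        !![A 0 - B 0, A 1 - B 1, Gamma Xs Ys B Y - Gamma Xs Ys A Y;
           A 0 - C 0, A 1 - C 1, Gamma Xs Ys C Y - Gamma Xs Ys A Y;
           A 0 - D 0, A 1 - D 1, Gamma Xs Ys D Y - Gamma Xs Ys A Y]
        - 2 * Δ * A 2) ^ 2
    - 4 * Δ ^ 2 * (Gamma Xs Ys A Y + ‖A‖ ^ 2) = 0 :=
  psi_EF_vanishes_general A B C D E F Xs Ys Δ hΔ X Y hsol
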